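/- arXiv:0804.4384 — 7 statements merged into one kernel-verified Lean document; each statement's English description precedes it below -/
import Mathlib

section
/- If (f, w) ∈ Q and every coordinate f_i^{(α)} lies in {0,1}, then the word c = Ξ^{-1}(f) (i.e., c_i = α if f_i^{(α)} = 1, and c_i = 0 if f_i^{(α)} = 0 for all α ∈ R⁻) is a codeword of C. -/
/-- The single parity-check code `C_j` of row `j` of `H`, represented as full-length
vectors supported on `I_j = supp(H_j)` and satisfying the `j`-th parity check. -/
def localCode {m n : ℕ} {R : Type} [CommRing R] [Fintype R] [DecidableEq R]
    (H : Matrix (Fin m) (Fin n) R) (j : Fin m) : Finset (Fin n → R) :=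
  Finset.univ.filter (fun b => (∀ i, H j i = 0 → b i = 0) ∧ (∑ i, b i * H j i) = 0)
/-- Membership in the relaxed LP decoding polytope `Q`: `w ≥ 0` on each local code,
each `w_j` sums to one, and `f` is the induced marginal at every supported coordinate. -/
def memQ {m n : ℕ} {R : Type} [CommRing R] [Fintype R] [DecidableEq R]
    (H : Matrix (Fin m) (Fin n) R)
    (f : Fin n → {α : R // α ≠ 0} → ℝ) (w : Fin m → (Fin n → R) → ℝ) : Prop :=
  (∀ j, ∀ b ∈ localCode H j, 0 ≤ w j b) ∧
  (∀ j, ∑ b ∈ localCode H j, w j b = 1) ∧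
  (∀ j i (α : {α : R // α ≠ 0}), H j i ≠ 0 →
    f i α = ∑ b ∈ (localCode H j).filter (fun b => b i = α.val), w j b)

/-- if `(f,w) ∈ Q` and `f` is 0/1-valued, then the word `c = Ξ⁻¹(f)`
(determined by `c_i = α ↔ f_i^{(α)} = 1`) is a codeword of `C`. -/
theorem integral_point_is_codeword {m n : ℕ} {R : Type}
    [CommRing R] [Fintype R] [DecidableEq R]
    (H : Matrix (Fin m) (Fin n) R)
    (f : Fin n → {α : R // α ≠ 0} → ℝ) (w : Fin m → (Fin n → R) → ℝ)
    (hQ : memQ H f w)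
    (hcols : ∀ i, ∃ j, H j i ≠ 0)
    (hint : ∀ i (α : {α : R // α ≠ 0}), f i α = 0 ∨ f i α = 1)
    (c : Fin n → R)
    (hc : ∀ i (α : {α : R // α ≠ 0}), c i = α.val ↔ f i α = 1) :
    ∀ j, ∑ i, c i * H j i = 0 := by
  obtain ⟨hpos, hsum, hmarg⟩ := hQ
  intro j
  -- find a local codeword with positive weight
  have hex : ∃ b ∈ localCode H j, w j b ≠ 0 := by
    by_contra h
    push_neg at h
    have : ∑ b ∈ localCode H j, w j b = 0 := Finset.sum_eq_zero h
    rw [hsum j] at this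
    exact one_ne_zero this
  obtain ⟨b, hbmem, hbne⟩ := hex
  have hbpos : 0 < w j b := lt_of_le_of_ne (hpos j b hbmem) (Ne.symm hbne)
  -- key: if f i α = 0 and H j i ≠ 0, then b i ≠ α
  have key0 : ∀ i (α : {α : R // α ≠ 0}), H j i ≠ 0 → f i α = 0 → b i ≠ α.val := by
    intro i α hHi hf hbα
    have hzero : ∑ b' ∈ (localCode H j).filter (fun b' => b' i = α.val), w j b' = 0 := by
      rw [← hmarg j i α hHi]; exact hf
    have := (Finset.sum_eq_zero_iff_of_nonneg (fun b' hb' =>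
      hpos j b' (Finset.mem_of_mem_filter b' hb'))).mp hzero b
      (Finset.mem_filter.mpr ⟨hbmem, hbα⟩)
    exact hbne this
  -- key: if f i α = 1 and H j i ≠ 0, then b i = α
  have key1 : ∀ i (α : {α : R // α ≠ 0}), H j i ≠ 0 → f i α = 1 → b i = α.val := by
    intro i α hHi hf
    by_contra hbα
    have hsplit := Finset.sum_filter_add_sum_filter_not (localCode H j)
      (fun b' => b' i = α.val) (w j)
    rw [hsum j, ← hmarg j i α hHi, hf] at hsplit
    have hzero : ∑ b' ∈ (localCode H j).filter (fun b' => ¬ b' i = α.val), w j b' = 0 := by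
      linarith
    have := (Finset.sum_eq_zero_iff_of_nonneg (fun b' hb' =>
      hpos j b' (Finset.mem_of_mem_filter b' hb'))).mp hzero b
      (Finset.mem_filter.mpr ⟨hbmem, hbα⟩)
    exact hbne this
  -- b agrees with c on the support of row j
  have hagree : ∀ i, H j i ≠ 0 → c i = b i := by
    intro i hHi
    by_cases hci : c i = 0
    · rw [hci]
      by_contra hbi
      have hbi' : b i ≠ 0 := fun h => hbi h.symm
      have hf0 : f i ⟨b i, hbi'⟩ = 0 := by
        rcases hint i ⟨b i, hbi'⟩ with h | h
        · exact h
        · exact absurd ((hc i ⟨b i, hbi'⟩).mpr h) (by rw [hci]; exact fun h' => hbi' h'.symm)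
      exact key0 i ⟨b i, hbi'⟩ hHi hf0 rfl
    · have hf1 : f i ⟨c i, hci⟩ = 1 := (hc i ⟨c i, hci⟩).mp rfl
      rw [key1 i ⟨c i, hci⟩ hHi hf1]
  -- conclude using the parity check satisfied by b
  have hbcode := Finset.mem_filter.mp hbmem
  calc ∑ i, c i * H j i = ∑ i, b i * H j i := by
        apply Finset.sum_congr rfl
        intro i _
        by_cases hHi : H j i = 0
        · rw [hHi, mul_zero, mul_zero]
        · rw [hagree i hHi]
    _ = 0 := hbcode.2.2
end

section
/- If the LP decoder's optimal solution (f, w) over the polytope Q has f integral (all f_i^{(α)} ∈ {0,1}), then the codeword Ξ^{-1}(f) minimizes the cost Λ(y)·Ξ(c)^T over all codewords c ∈ C, i.e. it is the maximum-likelihood codeword. -/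
/-- the ML certificate property. If the LP optimum `(f,w)` over `Q` has `f`
integral, then the corresponding word `Ξ⁻¹(f)` is a codeword minimizing the cost
`Λ(y)·Ξ(c)ᵀ` over all codewords, i.e. it is the maximum-likelihood codeword. -/
theorem ml_certificate {m n : ℕ} {R : Type}
    [CommRing R] [Fintype R] [DecidableEq R]
    (H : Matrix (Fin m) (Fin n) R)
    (Λ : Fin n → {α : R // α ≠ 0} → ℝ)
    (f : Fin n → {α : R // α ≠ 0} → ℝ) (w : Fin m → (Fin n → R) → ℝ)
    (hQ : memQ H f w)
    (hopt : ∀ f' w', memQ H f' w' →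
      ∑ i, ∑ α : {α : R // α ≠ 0}, Λ i α * f i α ≤
      ∑ i, ∑ α : {α : R // α ≠ 0}, Λ i α * f' i α)
    (hint : ∀ i (α : {α : R // α ≠ 0}), f i α = 0 ∨ f i α = 1)
    (c : Fin n → R)
    (hc : ∀ i (α : {α : R // α ≠ 0}), c i = α.val ↔ f i α = 1) :
    (∀ j, ∑ i, c i * H j i = 0) ∧
    (∀ c' : Fin n → R, (∀ j, ∑ i, c' i * H j i = 0) →
      ∑ i, ∑ α : {α : R // α ≠ 0}, Λ i α * (if c i = α.val then (1 : ℝ) else 0) ≤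
      ∑ i, ∑ α : {α : R // α ≠ 0}, Λ i α * (if c' i = α.val then (1 : ℝ) else 0)) := by
  obtain ⟨hw0, hw1, hmarg⟩ := hQ
  -- f is the indicator of c
  have hf : ∀ i (α : {α : R // α ≠ 0}), f i α = if c i = α.val then (1 : ℝ) else 0 := by
    intro i α
    by_cases h : c i = α.val
    · simp [h, (hc i α).mp h]
    · simp only [h, if_false]
      rcases hint i α with h0 | h1
      · exact h0
      · exact absurd ((hc i α).mpr h1) h
  -- any positively-weighted local codeword agrees with c on the support
  have key : ∀ j, ∀ b ∈ localCode H j, w j b ≠ 0 → ∀ i, H j i ≠ 0 → b i = c i := by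
    intro j b hb hwb i hi
    by_contra hne
    by_cases hbz : b i = 0
    · -- then c i ≠ 0, f i ⟨c i⟩ = 1, so weight concentrates on b' with b' i = c i
      have hcz : c i ≠ 0 := by intro h; exact hne (hbz.trans h.symm)
      set α : {α : R // α ≠ 0} := ⟨c i, hcz⟩
      have h1 : ∑ b' ∈ (localCode H j).filter (fun b' => b' i = α.val), w j b' = 1 := by
        rw [← hmarg j i α hi, hf i α]; simp [α]
      have hsplit := Finset.sum_filter_add_sum_filter_not (localCode H j)
        (fun b' => b' i = α.val) (w j)
      rw [hw1 j] at hsplit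
      have h0 : ∑ b' ∈ (localCode H j).filter (fun b' => ¬ b' i = α.val), w j b' = 0 := by
        linarith
      have := (Finset.sum_eq_zero_iff_of_nonneg (fun b' hb' => hw0 j b'
        (Finset.mem_of_mem_filter _ hb'))).mp h0 b
        (Finset.mem_filter.mpr ⟨hb, by simp [α]; intro h; exact hne h⟩)
      exact hwb this
    · set α : {α : R // α ≠ 0} := ⟨b i, hbz⟩
      have h0 : ∑ b' ∈ (localCode H j).filter (fun b' => b' i = α.val), w j b' = 0 := by
        rw [← hmarg j i α hi, hf i α]
        have : ¬ c i = α.val := fun h => hne h.symm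
        simp [this]
      have := (Finset.sum_eq_zero_iff_of_nonneg (fun b' hb' => hw0 j b'
        (Finset.mem_of_mem_filter _ hb'))).mp h0 b
        (Finset.mem_filter.mpr ⟨hb, rfl⟩)
      exact hwb this
  constructor
  · -- c is a codeword
    intro j
    obtain ⟨b, hb, hwb⟩ : ∃ b ∈ localCode H j, w j b ≠ 0 :=
      Finset.exists_ne_zero_of_sum_ne_zero (by rw [hw1 j]; norm_num)
    obtain ⟨hbsupp, hbpar⟩ := Finset.mem_filter.mp hb |>.2
    calc ∑ i, c i * H j i = ∑ i, b i * H j i := by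
          apply Finset.sum_congr rfl
          intro i _
          by_cases hi : H j i = 0
          · rw [hi, mul_zero, mul_zero]
          · rw [key j b hb hwb i hi]
      _ = 0 := hbpar
  · intro c' hc'
    set f' : Fin n → {α : R // α ≠ 0} → ℝ :=
      fun i α => if c' i = α.val then 1 else 0 with hf'
    set bb : Fin m → Fin n → R := fun j i => if H j i = 0 then 0 else c' i with hbb
    set w' : Fin m → (Fin n → R) → ℝ := fun j b => if b = bb j then 1 else 0 with hw'
    have hbbmem : ∀ j, bb j ∈ localCode H j := by
      intro j
      refine Finset.mem_filter.mpr ⟨Finset.mem_univ _, fun i hi => by simp [bb, hi], ?_⟩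
      calc ∑ i, bb j i * H j i = ∑ i, c' i * H j i := by
            apply Finset.sum_congr rfl
            intro i _
            by_cases hi : H j i = 0
            · rw [hi, mul_zero, mul_zero]
            · simp [bb, hi]
        _ = 0 := hc' j
    have hQ' : memQ H f' w' := by
      refine ⟨fun j b _ => by positivity, fun j => ?_, fun j i α hi => ?_⟩
      · rw [Finset.sum_ite_eq' (localCode H j) (bb j) (fun _ => (1:ℝ))]
        simp [hbbmem j]
      · rw [Finset.sum_ite_eq' _ (bb j) (fun _ => (1:ℝ))]
        have : bb j i = c' i := by simp [bb, hi]
        by_cases h : c' i = α.val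
        · simp [f', h, Finset.mem_filter, hbbmem j, this]
        · simp [f', h, Finset.mem_filter, this]
    have := hopt f' w' hQ'
    calc ∑ i, ∑ α : {α : R // α ≠ 0}, Λ i α * (if c i = α.val then (1 : ℝ) else 0)
        = ∑ i, ∑ α : {α : R // α ≠ 0}, Λ i α * f i α := by
          apply Finset.sum_congr rfl; intro i _
          apply Finset.sum_congr rfl; intro α _
          rw [hf i α]
      _ ≤ ∑ i, ∑ α : {α : R // α ≠ 0}, Λ i α * f' i α := this
      _ = _ := rfl
end

section
/- Conversely, if there exists an LP pseudocodeword (h, z) with h ≠ 0 and Λ(y)·h^T < 0, then there exists a point (f, w) ∈ Q with f ≠ 0 and Λ(y)·f^T < 0 (namely f = h/M, w = z/M), so the LP decoder does not output the all-zero codeword. -/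
/-- `(h, z)` is an LP pseudocodeword with scaling parameter `M`: the `z_{j,b}` are
nonnegative integers summing to `M` on each local code `C_j`, and `h` is the induced
(integer) marginal at every supported coordinate. -/
def isLPpcw {m n : ℕ} {R : Type} [CommRing R] [Fintype R] [DecidableEq R]
    (H : Matrix (Fin m) (Fin n) R) (M : ℕ)
    (h : Fin n → {α : R // α ≠ 0} → ℕ) (z : Fin m → (Fin n → R) → ℕ) : Prop :=
  (∀ j, ∑ b ∈ localCode H j, z j b = M) ∧
  (∀ j i (α : {α : R // α ≠ 0}), H j i ≠ 0 →
    h i α = ∑ b ∈ (localCode H j).filter (fun b => b i = α.val), z j b)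

/-- if an LP pseudocodeword `(h,z)` (with parameter `M > 0`) has `h ≠ 0` and
strictly negative cost, then some point `(f,w) ∈ Q` with `f ≠ 0` has strictly negative
cost (take `f = h/M`, `w = z/M`), so the LP decoder does not output the zero codeword. -/
theorem pseudocodeword_gives_lp_error {m n : ℕ} {R : Type}
    [CommRing R] [Fintype R] [DecidableEq R]
    (H : Matrix (Fin m) (Fin n) R)
    (Λ : Fin n → {α : R // α ≠ 0} → ℝ)
    (M : ℕ) (hM : 0 < M)
    (h : Fin n → {α : R // α ≠ 0} → ℕ) (z : Fin m → (Fin n → R) → ℕ)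
    (hp : isLPpcw H M h z)
    (hne : h ≠ 0)
    (hcost : ∑ i, ∑ α : {α : R // α ≠ 0}, Λ i α * (h i α : ℝ) < 0) :
    ∃ (f : Fin n → {α : R // α ≠ 0} → ℝ) (w : Fin m → (Fin n → R) → ℝ),
      memQ H f w ∧ f ≠ 0 ∧
      ∑ i, ∑ α : {α : R // α ≠ 0}, Λ i α * f i α < 0 := by
  
  have hMpos : (0:ℝ) < M := by exact_mod_cast hM
  refine ⟨fun i α => (h i α : ℝ) / M, fun j b => (z j b : ℝ) / M, ⟨?_, ?_, ?_⟩, ?_, ?_⟩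
  · intro j b _; positivity
  · intro j
    rw [← Finset.sum_div]
    rw [div_eq_one_iff_eq hMpos.ne']
    exact_mod_cast hp.1 j
  · intro j i α hji
    rw [← Finset.sum_div]
    simp only
    congr 1
    exact_mod_cast hp.2 j i α hji
  · intro hf
    apply hne
    funext i α
    have := congrFun (congrFun hf i) α
    simp only [Pi.zero_apply, div_eq_zero_iff, Nat.cast_eq_zero] at this
    rcases this with h0 | h0
    · exact h0
    · exact absurd h0 hM.ne'
  · have : ∑ i, ∑ α : {α : R // α ≠ 0}, Λ i α * ((h i α : ℝ) / M)
        = (∑ i, ∑ α : {α : R // α ≠ 0}, Λ i α * (h i α : ℝ)) / M := by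
      rw [Finset.sum_div]
      congr 1; funext i
      rw [Finset.sum_div]
      congr 1; funext α
      ring
    rw [this]
    exact div_neg_of_neg_of_pos hcost hMpos
end

section
/- The map L defined on the polytope Q by: f̃_i^{(α)} = 1 − Σ_{γ∈R⁻} f_i^{(γ)} if α = −c_i, and f̃_i^{(α)} = f_i^{(α+c_i)} otherwise; together with w̃_{j,r} = w_{j, r + x_j(c)}, maps Q bijectively to itself for any fixed codeword c ∈ C. -/
/-- The map `f ↦ f̃` of the codeword-symmetry argument:
`f̃_i^{(α)} = 1 − Σ_γ f_i^{(γ)}` if `α = −c_i`, and `f̃_i^{(α)} = f_i^{(α+c_i)}` otherwise. -/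
def Lmap {n : ℕ} {R : Type} [CommRing R] [Fintype R] [DecidableEq R]
    (c : Fin n → R) (f : Fin n → {α : R // α ≠ 0} → ℝ) :
    Fin n → {α : R // α ≠ 0} → ℝ :=
  fun i α =>
    if h : α.val = - c i then 1 - ∑ γ : {γ : R // γ ≠ 0}, f i γ
    else f i ⟨α.val + c i, fun h0 => h (eq_neg_of_add_eq_zero_left h0)⟩

/-- The map `w ↦ w̃` of the codeword-symmetry argument: `w̃_{j,r} = w_{j, r + x_j(c)}`. -/
def Lwmap {m n : ℕ} {R : Type} [CommRing R] [Fintype R] [DecidableEq R]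
    (H : Matrix (Fin m) (Fin n) R) (c : Fin n → R)
    (w : Fin m → (Fin n → R) → ℝ) : Fin m → (Fin n → R) → ℝ :=
  fun j r => w j (fun i => r i + if H j i = 0 then 0 else c i)

/-!
Extend each `f_i` to a function `f̄_i : R → ℝ` by `f̄_i(0) = 1 − Σ_γ f_i^{(γ)}`; on `Q` this is
exactly the full marginal `x ↦ Σ_{b ∈ C_j, b_i = x} w_{j,b}`, and `L` is the translation
`f̄_i ↦ f̄_i(· + c_i)`, `w_j ↦ w_j(· + x_j(c))`. Since `x_j(c) ∈ C_j` and `C_j` is an additive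
group, translating `w_j` preserves nonnegativity and total mass and translates its marginals,
so `L` maps `Q` into `Q`; translation by `−c` inverts it.
-/

open Finset

theorem Finset.sum_comp_add_right_of_add_mem_iff {G M : Type*} [AddGroup G] [AddCommMonoid M]
    {s : Finset G} {a : G} (hs : ∀ b, b + a ∈ s ↔ b ∈ s) (g : G → M) :
    ∑ b ∈ s, g (b + a) = ∑ b ∈ s, g b :=
  Finset.sum_equiv (Equiv.addRight a) (fun b => (hs b).symm) (fun _ _ => rfl)

section extendByComplement

variable {R : Type*} [Zero R] [DecidableEq R] [Fintype R]

noncomputable def extendByComplement (g : {α : R // α ≠ 0} → ℝ) : R → ℝ :=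
  fun x => if h : x = 0 then 1 - ∑ γ, g γ else g ⟨x, h⟩

theorem extendByComplement_zero (g : {α : R // α ≠ 0} → ℝ) :
    extendByComplement g 0 = 1 - ∑ γ, g γ :=
  dif_pos rfl

theorem extendByComplement_of_ne_zero (g : {α : R // α ≠ 0} → ℝ) {x : R} (hx : x ≠ 0) :
    extendByComplement g x = g ⟨x, hx⟩ :=
  dif_neg hx

theorem sum_extendByComplement (g : {α : R // α ≠ 0} → ℝ) :
    ∑ x, extendByComplement g x = 1 := by
  have hg : ∀ γ : {α : R // α ≠ 0}, extendByComplement g γ = g γ := fun γ =>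
    extendByComplement_of_ne_zero g γ.2
  rw [Fintype.sum_eq_add_sum_subtype_ne _ 0, extendByComplement_zero]
  simp only [hg, sub_add_cancel]

theorem extendByComplement_eq_of_sum_eq_one {h : R → ℝ} (hh : ∑ x, h x = 1) :
    extendByComplement (fun γ => h γ) = h := by
  funext x
  by_cases hx : x = 0
  · rw [hx, extendByComplement_zero, ← hh, Fintype.sum_eq_add_sum_subtype_ne _ 0,
      add_sub_cancel_right]
  · exact extendByComplement_of_ne_zero _ hx

end extendByComplement

section Lmap

variable {n : ℕ} {R : Type} [CommRing R] [Fintype R] [DecidableEq R]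

theorem Lmap_apply (c : Fin n → R) (f : Fin n → {α : R // α ≠ 0} → ℝ) (i : Fin n)
    (α : {α : R // α ≠ 0}) : Lmap c f i α = extendByComplement (f i) (α + c i) := by
  unfold Lmap
  split_ifs with h
  · rw [h, neg_add_cancel, extendByComplement_zero]
  · rw [extendByComplement_of_ne_zero]

theorem extendByComplement_Lmap (c : Fin n → R) (f : Fin n → {α : R // α ≠ 0} → ℝ)
    (i : Fin n) : extendByComplement (Lmap c f i) = fun x => extendByComplement (f i) (x + c i) := by
  have hsum : ∑ x, extendByComplement (f i) (x + c i) = 1 :=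
    (Equiv.sum_comp (Equiv.addRight (c i)) _).trans (sum_extendByComplement (f i))
  rw [← extendByComplement_eq_of_sum_eq_one hsum]
  exact congrArg extendByComplement (funext (Lmap_apply c f i))

theorem Lmap_neg_Lmap (c : Fin n → R) (f : Fin n → {α : R // α ≠ 0} → ℝ) :
    Lmap (-c) (Lmap c f) = f := by
  funext i α
  rw [Lmap_apply, extendByComplement_Lmap, Pi.neg_apply]
  dsimp only
  rw [neg_add_cancel_right, extendByComplement_of_ne_zero _ α.2]

end Lmap

section localWord

variable {m n : ℕ} {R : Type} [NegZeroClass R] [DecidableEq R]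

/-- The local word `x_j(c)`, padded with zeros outside `I_j`. -/
def localWord (H : Matrix (Fin m) (Fin n) R) (j : Fin m) (c : Fin n → R) : Fin n → R :=
  fun i => if H j i = 0 then 0 else c i

theorem localWord_neg (H : Matrix (Fin m) (Fin n) R) (j : Fin m) (c : Fin n → R) :
    localWord H j (-c) = -localWord H j c := by
  funext i
  simp only [localWord, Pi.neg_apply]
  split_ifs <;> simp

end localWord

section localCode

variable {m n : ℕ} {R : Type} [CommRing R] [Fintype R] [DecidableEq R]

def localMarginal (H : Matrix (Fin m) (Fin n) R) (j : Fin m) (w : (Fin n → R) → ℝ)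
    (i : Fin n) (x : R) : ℝ :=
  ∑ b ∈ localCode H j with b i = x, w b

theorem Lwmap_apply (H : Matrix (Fin m) (Fin n) R) (c : Fin n → R)
    (w : Fin m → (Fin n → R) → ℝ) (j : Fin m) (r : Fin n → R) :
    Lwmap H c w j r = w j (r + localWord H j c) :=
  rfl

theorem localWord_mem_localCode (H : Matrix (Fin m) (Fin n) R) (j : Fin m) {c : Fin n → R}
    (hc : ∑ i, c i * H j i = 0) : localWord H j c ∈ localCode H j := by
  simp only [localCode, localWord, mem_filter, mem_univ, true_and]
  refine ⟨fun i hi => if_pos hi, (Fintype.sum_congr _ _ fun i => ?_).trans hc⟩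
  split_ifs with hi <;> simp [hi]

theorem add_mem_localCode_iff {H : Matrix (Fin m) (Fin n) R} {j : Fin m} {x : Fin n → R}
    (hx : x ∈ localCode H j) (b : Fin n → R) :
    b + x ∈ localCode H j ↔ b ∈ localCode H j := by
  simp only [localCode, mem_filter, mem_univ, true_and] at hx ⊢
  obtain ⟨hx_supp, hx_check⟩ := hx
  have hsupp : ∀ i, H j i = 0 → ((b + x) i = 0 ↔ b i = 0) := fun i hi => by
    rw [Pi.add_apply, hx_supp i hi, add_zero]
  have hcheck : ∑ i, (b + x) i * H j i = ∑ i, b i * H j i := by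
    simp only [Pi.add_apply, add_mul, sum_add_distrib, hx_check, add_zero]
  rw [hcheck]
  exact and_congr_left' (forall_congr' fun i => forall_congr' fun hi => hsupp i hi)

theorem sum_localCode_add {H : Matrix (Fin m) (Fin n) R} {j : Fin m} {x : Fin n → R}
    (hx : x ∈ localCode H j) (g : (Fin n → R) → ℝ) :
    ∑ b ∈ localCode H j, g (b + x) = ∑ b ∈ localCode H j, g b :=
  Finset.sum_comp_add_right_of_add_mem_iff (add_mem_localCode_iff hx) g

theorem sum_localMarginal (H : Matrix (Fin m) (Fin n) R) (j : Fin m) (w : (Fin n → R) → ℝ)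
    (i : Fin n) : ∑ x, localMarginal H j w i x = ∑ b ∈ localCode H j, w b :=
  sum_fiberwise _ _ _

theorem localMarginal_Lwmap (H : Matrix (Fin m) (Fin n) R) {j : Fin m} {c : Fin n → R}
    (hc : ∑ i, c i * H j i = 0) (w : Fin m → (Fin n → R) → ℝ) {i : Fin n}
    (hji : H j i ≠ 0) (x : R) :
    localMarginal H j (Lwmap H c w j) i x = localMarginal H j (w j) i (x + c i) := by
  have hshift : ∀ b : Fin n → R, (b + localWord H j c) i = b i + c i := fun b => by
    simp only [Pi.add_apply, localWord, if_neg hji]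
  simp only [localMarginal, sum_filter, Lwmap_apply]
  rw [← sum_localCode_add (localWord_mem_localCode H j hc)
    (fun b => if b i = x + c i then w j b else 0)]
  simp only [hshift, add_left_inj]

theorem extendByComplement_eq_localMarginal {H : Matrix (Fin m) (Fin n) R} {j : Fin m}
    {w : (Fin n → R) → ℝ} (hw : ∑ b ∈ localCode H j, w b = 1) {i : Fin n}
    {g : {α : R // α ≠ 0} → ℝ} (hg : ∀ α, g α = localMarginal H j w i α) :
    extendByComplement g = localMarginal H j w i := by
  rw [funext hg]
  exact extendByComplement_eq_of_sum_eq_one ((sum_localMarginal H j w i).trans hw)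

theorem memQ_Lmap_Lwmap (H : Matrix (Fin m) (Fin n) R) {c : Fin n → R}
    (hc : ∀ j, ∑ i, c i * H j i = 0) {f : Fin n → {α : R // α ≠ 0} → ℝ}
    {w : Fin m → (Fin n → R) → ℝ} (h : memQ H f w) : memQ H (Lmap c f) (Lwmap H c w) := by
  obtain ⟨hnonneg, hsum, hmarg⟩ := h
  have hx := fun j => localWord_mem_localCode H j (hc j)
  refine ⟨fun j b hb => hnonneg j _ ((add_mem_localCode_iff (hx j) b).2 hb),
    fun j => (sum_localCode_add (hx j) (w j)).trans (hsum j), fun j i α hji => ?_⟩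
  rw [Lmap_apply, extendByComplement_eq_localMarginal (hsum j) (fun α => hmarg j i α hji)]
  exact (localMarginal_Lwmap H (hc j) w hji α).symm

theorem Lwmap_neg_Lwmap (H : Matrix (Fin m) (Fin n) R) (c : Fin n → R)
    (w : Fin m → (Fin n → R) → ℝ) : Lwmap H (-c) (Lwmap H c w) = w := by
  funext j r
  simp only [Lwmap_apply, localWord_neg, neg_add_cancel_right]

end localCode

/-- for any fixed codeword `c ∈ C`, the map `L : (f,w) ↦ (f̃,w̃)` maps the
polytope `Q` bijectively onto itself. -/
theorem Lmap_bijOn_polytope {m n : ℕ} {R : Type}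
    [CommRing R] [Fintype R] [DecidableEq R]
    (H : Matrix (Fin m) (Fin n) R)
    (c : Fin n → R) (hc : ∀ j, ∑ i, c i * H j i = 0) :
    Set.BijOn
      (fun p : (Fin n → {α : R // α ≠ 0} → ℝ) × (Fin m → (Fin n → R) → ℝ) =>
        (Lmap c p.1, Lwmap H c p.2))
      {p | memQ H p.1 p.2} {p | memQ H p.1 p.2} := by
  have hc_neg : ∀ j, ∑ i, (-c) i * H j i = 0 := fun j => by
    simp only [Pi.neg_apply, neg_mul, sum_neg_distrib, hc j, neg_zero]
  have hinv : ∀ (d : Fin n → R) (p : (Fin n → {α : R // α ≠ 0} → ℝ) × (Fin m → (Fin n → R) → ℝ)),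
      (Lmap (-d) (Lmap d p.1), Lwmap H (-d) (Lwmap H d p.2)) = p := fun d p => by
    rw [Lmap_neg_Lmap, Lwmap_neg_Lwmap]
  refine Set.InvOn.bijOn (f' := fun p => (Lmap (-c) p.1, Lwmap H (-c) p.2))
    ⟨fun p _ => hinv c p, fun p _ => by simpa only [neg_neg] using hinv (-c) p⟩
    (fun p hp => memQ_Lmap_Lwmap H hc hp) (fun p hp => memQ_Lmap_Lwmap H hc_neg hp)
end

section
/- Given an LP pseudocodeword (h, z) of C with parameter M = Σ_{b∈C_j} z_{j,b}, there exists an M-cover of the Tanner graph of H together with a labelling of the variable-vertex copies by ring elements satisfying all lifted parity checks, such that for every i and every α ∈ R, the number of copies of variable vertex u_i labelled α equals h_i^{(α)} (where h_i^{(0)} = M − Σ_{α∈R⁻} h_i^{(α)}). -/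
/-!
Choose, for every check `j`, a sequence `β j` of `M` local codewords in which each `b ∈ C_j` occurs
`z j b` times, and for every variable `i` a labelling `p i` of the `M` copies of `u_i` in which
each `α` occurs `h_i^{(α)}` times. When `H j i ≠ 0`, the values of the `i`-th coordinates of
`β j` occur with the same multiplicities as those of `p i`, since both are the marginal of `z j`
at `i`; a permutation matching the two is the perfect matching between the copies of `v_j` and
of `u_i`. The check at copy `l` of `v_j` then reads the local codeword `β j l`.
-/

open Finset

lemma exists_perm_comp_eq_of_card_filter_eq {ι D : Type*} [Fintype ι] [DecidableEq D]
    (f g : ι → D) (hfg : ∀ a, #{l | f l = a} = #{l | g l = a}) :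
    ∃ e : Equiv.Perm ι, ∀ l, g (e l) = f l :=
  ⟨Equiv.ofFiberEquiv fun a =>
      Fintype.equivOfCardEq (by simpa [Fintype.card_subtype] using hfg a),
    Equiv.ofFiberEquiv_map _⟩

lemma exists_fun_card_filter_eq {ι D : Type*} [Fintype ι] [DecidableEq D]
    (s : Finset D) (c : D → ℕ) (hc : ∑ b ∈ s, c b = Fintype.card ι) :
    ∃ f : ι → D, (∀ l, f l ∈ s) ∧ ∀ b ∈ s, #{l | f l = b} = c b := by
  have hcard : Fintype.card ι = Fintype.card (Σ b : s, Fin (c b)) := by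
    simp [← hc, ← sum_attach s c]
  let e := Fintype.equivOfCardEq hcard
  refine ⟨fun l => (e l).1, fun l => (e l).1.2, fun b hb => ?_⟩
  rw [← Fintype.card_subtype, ← Fintype.card_fin (c b)]
  exact Fintype.card_congr ((e.subtypeEquiv fun _ => by simp [Subtype.ext_iff]).trans
    (Equiv.sigmaSubtype (β := fun b : s => Fin (c b)) ⟨b, hb⟩))

lemma card_filter_comp_eq_sum {ι D E : Type*} [Fintype ι] [DecidableEq D] [DecidableEq E]
    {s : Finset D} {c : D → ℕ} {f : ι → D} (hf : ∀ l, f l ∈ s)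
    (hcount : ∀ b ∈ s, #{l | f l = b} = c b) (g : D → E) (a : E) :
    #{l | g (f l) = a} = ∑ b ∈ s with g b = a, c b := by
  rw [card_eq_sum_card_fiberwise (f := f) (t := {b ∈ s | g b = a})
    fun l hl => mem_filter.2 ⟨hf l, (mem_filter.1 hl).2⟩]
  refine sum_congr rfl fun b hb => ?_
  rw [mem_filter] at hb
  rw [← hcount b hb.1, filter_filter]
  exact congrArg card (filter_congr fun l _ => ⟨And.right, fun hl => ⟨hl ▸ hb.2, hl⟩⟩)

/-- The paper's `h_i^{(0)} = M - ∑ α, h_i^{(α)}` adjoined to `h_i`. The subtraction in `ℕ` does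
not truncate for an LP pseudocodeword at a column meeting some check
(`isLPpcw.sum_filter_eq_zero_add_sum`). -/
def marginalWithZero {R : Type*} [Zero R] [Fintype R] [DecidableEq R]
    (M : ℕ) (g : {α : R // α ≠ 0} → ℕ) (α : R) : ℕ :=
  if hα : α = 0 then M - ∑ a, g a else g ⟨α, hα⟩

namespace isLPpcw

variable {m n : ℕ} {R : Type} [CommRing R] [Fintype R] [DecidableEq R]
  {H : Matrix (Fin m) (Fin n) R} {M : ℕ}
  {h : Fin n → {α : R // α ≠ 0} → ℕ} {z : Fin m → (Fin n → R) → ℕ}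

lemma sum_filter_eq_zero_add_sum (hp : isLPpcw H M h z) {j : Fin m} {i : Fin n}
    (hji : H j i ≠ 0) :
    ∑ b ∈ localCode H j with b i = 0, z j b + ∑ α, h i α = M := by
  rw [← hp.1 j, ← sum_fiberwise (localCode H j) (fun b => b i) (z j),
    Fintype.sum_eq_add_sum_subtype_ne (fun α => ∑ b ∈ localCode H j with b i = α, z j b) 0]
  exact congrArg _ (sum_congr rfl fun α _ => hp.2 j i α hji)

lemma sum_filter_eq_marginalWithZero (hp : isLPpcw H M h z) {j : Fin m} {i : Fin n}
    (hji : H j i ≠ 0) (α : R) :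
    ∑ b ∈ localCode H j with b i = α, z j b = marginalWithZero M (h i) α := by
  unfold marginalWithZero
  split_ifs with hα
  · subst hα
    exact Nat.eq_sub_of_add_eq (hp.sum_filter_eq_zero_add_sum hji)
  · exact (hp.2 j i ⟨α, hα⟩ hji).symm

lemma sum_marginalWithZero (hp : isLPpcw H M h z) {j : Fin m} {i : Fin n}
    (hji : H j i ≠ 0) : ∑ α, marginalWithZero M (h i) α = M := by
  simp_rw [← hp.sum_filter_eq_marginalWithZero hji, sum_fiberwise]
  exact hp.1 j

end isLPpcw

/-- every LP pseudocodeword `(h,z)` with parameter `M` is realized by a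
graph-cover pseudocodeword: there is an `M`-cover of the Tanner graph (encoded by the
edge permutations `π j i : Fin M ≃ Fin M`) and a labelling `p` of the variable-vertex
copies satisfying every lifted parity check, such that for each `i` the number of copies
of `u_i` labelled `α` is `h_i^{(α)}` for `α ≠ 0`, and the copies labelled `0` together
with `Σ_{α∈R⁻} h_i^{(α)}` count up to `M` (i.e. the count is `h_i^{(0)} = M − Σ_α h_i^{(α)}`). -/
theorem lp_pcw_to_graph_cover_pcw {m n : ℕ} {R : Type}
    [CommRing R] [Fintype R] [DecidableEq R]
    (H : Matrix (Fin m) (Fin n) R)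
    (hcols : ∀ i, ∃ j, H j i ≠ 0)
    (M : ℕ)
    (h : Fin n → {α : R // α ≠ 0} → ℕ) (z : Fin m → (Fin n → R) → ℕ)
    (hp : isLPpcw H M h z) :
    ∃ (π : Fin m → Fin n → Equiv.Perm (Fin M)) (p : Fin n → Fin M → R),
      (∀ j l, ∑ i, p i (π j i l) * H j i = 0) ∧
      (∀ i (α : {α : R // α ≠ 0}),
        (Finset.univ.filter (fun l : Fin M => p i l = α.val)).card = h i α) ∧
      (∀ i, (Finset.univ.filter (fun l : Fin M => p i l = 0)).card +
        ∑ α : {α : R // α ≠ 0}, h i α = M) := by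
  choose β hβmem hβcount using fun j =>
    exists_fun_card_filter_eq (ι := Fin M) (localCode H j) (z j) (by simpa using hp.1 j)
  choose p hpcount using fun i => (exists_fun_card_filter_eq (ι := Fin M) univ
    (marginalWithZero M (h i)) (by simpa using hp.sum_marginalWithZero (hcols i).choose_spec)).imp
    fun _ hf => hf.2
  have hfiber : ∀ j i, H j i ≠ 0 → ∀ α, #{l | β j l i = α} = #{l | p i l = α} :=
    fun j i hji α => by
      rw [card_filter_comp_eq_sum (hβmem j) (hβcount j) (· i) α,
        hp.sum_filter_eq_marginalWithZero hji, hpcount i α (mem_univ α)]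
  choose π hπ using fun j i => if hji : H j i ≠ 0 then
      (exists_perm_comp_eq_of_card_filter_eq _ _ (hfiber j i hji)).imp fun _ he _ => he
    else ⟨1, fun hji' => absurd hji' hji⟩
  refine ⟨π, p, fun j l => ?_, fun i α => ?_, fun i => ?_⟩
  · rw [← (mem_filter.1 (hβmem j l)).2.2]
    refine sum_congr rfl fun i _ => ?_
    by_cases hji : H j i = 0
    · simp [hji]
    · rw [hπ j i hji l]
  · rw [hpcount i α (mem_univ _), marginalWithZero, dif_neg α.2]
  · obtain ⟨j, hji⟩ := hcols i
    rw [hpcount i 0 (mem_univ _), ← hp.sum_filter_eq_marginalWithZero hji]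
    exact hp.sum_filter_eq_zero_add_sum hji
end

section
/- Conversely, given any M-cover of the Tanner graph of H and any labelling of the variable-vertex copies satisfying all lifted parity checks, defining h_i^{(α)} as the number of copies of u_i labelled α (for α ∈ R⁻) and z_{j,b} as the number of copies of check vertex v_j whose neighbouring variable labels equal b, the pair (h, z) is an LP pseudocodeword of C with parameter M. -/
open Finset

variable {m n M : ℕ} {R : Type} [DecidableEq R]

def checkLocalWord [Zero R] (H : Matrix (Fin m) (Fin n) R)
    (π : Fin m → Fin n → Equiv.Perm (Fin M)) (p : Fin n → Fin M → R) (j : Fin m) (l : Fin M) :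
    Fin n → R :=
  fun i => if H j i = 0 then 0 else p i (π j i l)

lemma checkLocalWord_of_ne_zero [Zero R] {H : Matrix (Fin m) (Fin n) R}
    {π : Fin m → Fin n → Equiv.Perm (Fin M)} {p : Fin n → Fin M → R} {j : Fin m} {i : Fin n}
    (hji : H j i ≠ 0) (l : Fin M) : checkLocalWord H π p j l i = p i (π j i l) :=
  if_neg hji

lemma checkLocalWord_mem_localCode [CommRing R] [Fintype R] {H : Matrix (Fin m) (Fin n) R}
    {π : Fin m → Fin n → Equiv.Perm (Fin M)} {p : Fin n → Fin M → R} {j : Fin m} {l : Fin M}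
    (hcheck : ∑ i, p i (π j i l) * H j i = 0) : checkLocalWord H π p j l ∈ localCode H j := by
  refine mem_filter.2 ⟨mem_univ _, fun i hji => if_pos hji, ?_⟩
  rw [← hcheck]
  refine sum_congr rfl fun i _ => ?_
  by_cases hji : H j i = 0
  · simp [hji]
  · rw [checkLocalWord_of_ne_zero hji]

/-- every graph-cover pseudocodeword gives an LP pseudocodeword. Given an
`M`-cover of the Tanner graph (encoded by permutations `π j i`) and a labelling `p` of
the variable-vertex copies satisfying all lifted checks, setting `h_i^{(α)}` to the
number of copies of `u_i` labelled `α` and `z_{j,b}` to the number of copies of `v_j`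
whose neighbouring variable labels equal `b` yields an LP pseudocodeword with
parameter `M`, with `z_{j,b} ≠ 0` only for `b ∈ C_j`. -/
theorem graph_cover_pcw_to_lp_pcw {m n : ℕ} {R : Type}
    [CommRing R] [Fintype R] [DecidableEq R]
    (H : Matrix (Fin m) (Fin n) R)
    (M : ℕ) (π : Fin m → Fin n → Equiv.Perm (Fin M))
    (p : Fin n → Fin M → R)
    (hchecks : ∀ j l, ∑ i, p i (π j i l) * H j i = 0) :
    isLPpcw H M
      (fun i α => (Finset.univ.filter (fun l : Fin M => p i l = α.val)).card)
      (fun j b => (Finset.univ.filter (fun l : Fin M =>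
        (fun i => if H j i = 0 then 0 else p i (π j i l)) = b)).card) ∧
    (∀ j (b : Fin n → R),
      (Finset.univ.filter (fun l : Fin M =>
        (fun i => if H j i = 0 then 0 else p i (π j i l)) = b)).card ≠ 0 →
      b ∈ localCode H j) := by
  have hmem j l : checkLocalWord H π p j l ∈ localCode H j :=
    checkLocalWord_mem_localCode (hchecks j l)
  refine ⟨⟨fun j => ?_, fun j i α hji => ?_⟩, fun j b hb => ?_⟩
  · change ∑ b ∈ localCode H j, #{l | checkLocalWord H π p j l = b} = M
    rw [sum_card_fiberwise_eq_card_filter, filter_true_of_mem fun l _ => hmem j l,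
      card_univ, Fintype.card_fin]
  · change #{l | p i l = α.val} =
      ∑ b ∈ localCode H j with b i = α.val, #{l | checkLocalWord H π p j l = b}
    rw [sum_card_fiberwise_eq_card_filter]
    refine card_equiv (π j i).symm fun l => ?_
    simp [hmem, checkLocalWord_of_ne_zero hji]
  · obtain ⟨l, hl⟩ := (card_ne_zero.1 hb).exists_mem
    exact (mem_filter.1 hl).2 ▸ hmem j l
end

section
/- Let R be a finite ring with q elements, M a positive integer, k = (k_α)_{α∈R⁻} a vector of nonnegative integers, and Γ a finite index set. Suppose nonnegative integers x_i^{(α)} (i ∈ Γ, α ∈ R⁻) satisfy Σ_{i∈Γ} x_i^{(α)} = k_α·M for every α ∈ R⁻ and Σ_{α∈R⁻} x_i^{(α)} ≤ M for every i ∈ Γ. Then there exist nonnegative integers w_a indexed by the vectors a ∈ R^Γ having exactly k_α coordinates equal to α for each α ∈ R⁻ (and the rest equal to 0), such that Σ_a w_a = M and, for every α ∈ R⁻ and i ∈ Γ, x_i^{(α)} = Σ_{a : a_i = α} w_a. -/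
/-!
Adding a slack column `0` with entries `M - ∑_α x_i^{(α)}` turns `x` into a nonnegative integer
matrix `y : Γ × R → ℕ` with all row sums `M` and column sums `m_β · M`, where `m_0 = |Γ| - ∑ k_α`.
Such a matrix is a sum of `M` "assignment matrices" `(i, β) ↦ [a i = β]` with fibre sizes `m`,
as in the Birkhoff–von Neumann theorem: by Hall's theorem, `m_β` copies of each column can be
matched to the rows inside the support of `y`, and subtracting the resulting assignment lowers
`M` by one.
-/

open Finset

section Assignment

variable {β Γ : Type*} [Fintype β] [Fintype Γ] {M : ℕ} {m : β → ℕ} {y : Γ → β → ℕ}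

lemma sum_le_card_biUnion_support [DecidableEq Γ] (hM : 0 < M) (hrow : ∀ i, ∑ b, y i b ≤ M)
    (hcol : ∀ b, ∑ i, y i b = m b * M) (T : Finset β) :
    ∑ b ∈ T, m b ≤ #(T.biUnion fun b => {i | 0 < y i b}) := by
  set N := T.biUnion fun b => {i | 0 < y i b}
  have hN : ∀ b ∈ T, ∑ i, y i b = ∑ i ∈ N, y i b := fun b hb =>
    (sum_subset (subset_univ N) fun i _ hi => by
      by_contra h
      exact hi (mem_biUnion.2 ⟨b, hb, by simpa [Nat.pos_iff_ne_zero] using h⟩)).symm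
  refine Nat.le_of_mul_le_mul_right ?_ hM
  calc (∑ b ∈ T, m b) * M = ∑ b ∈ T, ∑ i ∈ N, y i b := by
        rw [sum_mul]; exact sum_congr rfl fun b hb => (hcol b) ▸ hN b hb
    _ = ∑ i ∈ N, ∑ b ∈ T, y i b := sum_comm
    _ ≤ ∑ i ∈ N, M := sum_le_sum fun i _ =>
        (sum_le_sum_of_subset (subset_univ T)).trans (hrow i)
    _ = #N * M := by rw [sum_const, smul_eq_mul]

lemma sum_eq_card_of_row_col_sums (hM : 0 < M) (hrow : ∀ i, ∑ b, y i b = M)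
    (hcol : ∀ b, ∑ i, y i b = m b * M) : ∑ b, m b = Fintype.card Γ := by
  refine Nat.eq_of_mul_eq_mul_right hM ?_
  rw [sum_mul, ← sum_congr rfl fun b _ => hcol b, sum_comm]
  simp [hrow]

/-- Hall's theorem, matching `m b` copies of each column `b` to the rows. -/
lemma exists_assignment_of_row_col_sums [DecidableEq β] [DecidableEq Γ] (hM : 0 < M)
    (hrow : ∀ i, ∑ b, y i b = M) (hcol : ∀ b, ∑ i, y i b = m b * M) :
    ∃ a : Γ → β, (∀ i, 0 < y i (a i)) ∧ ∀ b, #{i | a i = b} = m b := by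
  let t : (Σ b, Fin (m b)) → Finset Γ := fun p => {i | 0 < y i p.1}
  have hall : ∀ s, #s ≤ #(s.biUnion t) := fun s => by
    have hslots : s ⊆ (s.image Sigma.fst).sigma fun _ => univ := fun p hp =>
      mem_sigma.2 ⟨mem_image_of_mem _ hp, mem_univ _⟩
    calc #s ≤ ∑ b ∈ s.image Sigma.fst, m b := by simpa using card_le_card hslots
      _ ≤ #((s.image Sigma.fst).biUnion fun b => {i | 0 < y i b}) :=
          sum_le_card_biUnion_support hM (fun i => (hrow i).le) hcol _
      _ = #(s.biUnion t) := by rw [image_biUnion]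
  obtain ⟨f, hf, hft⟩ := (all_card_le_biUnion_card_iff_exists_injective t).1 hall
  have hcard : Fintype.card (Σ b, Fin (m b)) = Fintype.card Γ := by
    simpa using sum_eq_card_of_row_col_sums hM hrow hcol
  let e := Equiv.ofBijective f ((Fintype.bijective_iff_injective_and_card f).2 ⟨hf, hcard⟩)
  refine ⟨fun i => (e.symm i).1, fun i => ?_, fun b => ?_⟩
  · have hi := hft (e.symm i)
    rw [Equiv.ofBijective_apply_symm_apply f] at hi
    simpa [t] using hi
  · rw [← Fintype.card_subtype, ← Fintype.card_fin (m b)]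
    exact Fintype.card_congr ((e.symm.subtypeEquiv fun _ => Iff.rfl).trans (Equiv.sigmaSubtype b))

theorem exists_decomposition_into_assignments [DecidableEq β] [DecidableEq Γ]
    (hrow : ∀ i, ∑ b, y i b = M) (hcol : ∀ b, ∑ i, y i b = m b * M) :
    ∃ w : (Γ → β) → ℕ, (∀ a, w a ≠ 0 → ∀ b, #{i | a i = b} = m b) ∧ ∑ a, w a = M ∧
      ∀ i b, y i b = ∑ a with a i = b, w a := by
  induction M generalizing y with
  | zero =>
    refine ⟨0, by simp, by simp, fun i b => ?_⟩
    simpa using (sum_eq_zero_iff.1 (hrow i)) b (mem_univ b)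
  | succ M ih =>
    obtain ⟨a, hpos, hfib⟩ := exists_assignment_of_row_col_sums M.succ_pos hrow hcol
    set y' : Γ → β → ℕ := fun i b => y i b - if a i = b then 1 else 0
    have hy : ∀ i b, y i b = y' i b + if a i = b then 1 else 0 := fun i b => by
      by_cases h : a i = b
      · subst h
        simp only [y', if_true]
        have := hpos i
        omega
      · simp [y', h]
    have hrow' : ∀ i, ∑ b, y' i b = M := fun i => by
      have := hrow i
      rw [sum_congr rfl fun b _ => hy i b, sum_add_distrib, sum_ite_eq] at this
      simpa using this
    have hcol' : ∀ b, ∑ i, y' i b = m b * M := fun b => by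
      have := hcol b
      rw [sum_congr rfl fun i _ => hy i b, sum_add_distrib, sum_boole, hfib] at this
      simp only [Nat.cast_id] at this
      linarith
    obtain ⟨w, hsupp, hsum, hmarg⟩ := ih hrow' hcol'
    refine ⟨fun c => w c + if c = a then 1 else 0, fun c hc => ?_, ?_, fun i b => ?_⟩
    · by_cases h : c = a
      · exact h ▸ hfib
      · exact hsupp c (by simpa [h] using hc)
    · simp [sum_add_distrib, hsum]
    · rw [sum_add_distrib, sum_ite_eq', ← hmarg, hy]
      simp

end Assignment

lemma sum_dite_eq_add_sum {β A : Type*} [Fintype β] [DecidableEq β] [Zero β] [AddCommMonoid A]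
    (c : A) (f : {b : β // b ≠ 0} → A) :
    ∑ b, (if h : b = 0 then c else f ⟨b, h⟩) = c + ∑ b, f b := by
  rw [Fintype.sum_eq_add_sum_subtype_ne _ 0, dif_pos rfl]
  exact congrArg (c + ·) (sum_congr rfl fun b _ => dif_neg b.2)

lemma sum_tsub_sum_eq_card_tsub_mul {Γ ι : Type*} [Fintype Γ] [Fintype ι] {M : ℕ}
    {k : ι → ℕ} {x : Γ → ι → ℕ} (hsum : ∀ j, ∑ i, x i j = k j * M)
    (hbd : ∀ i, ∑ j, x i j ≤ M) :
    ∑ i, (M - ∑ j, x i j) = (Fintype.card Γ - ∑ j, k j) * M := by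
  rw [sum_tsub_distrib _ fun i _ => hbd i, sum_comm, sum_congr rfl fun j _ => hsum j,
    ← sum_mul, Nat.sub_mul, sum_const, card_univ, smul_eq_mul]

theorem flow_decomposition_general {R : Type} [CommRing R] [Fintype R] [DecidableEq R]
    {Γ : Type} [Fintype Γ] [DecidableEq Γ]
    (M : ℕ)
    (k : {α : R // α ≠ 0} → ℕ)
    (x : Γ → {α : R // α ≠ 0} → ℕ)
    (hsum : ∀ α : {α : R // α ≠ 0}, ∑ i, x i α = k α * M)
    (hbd : ∀ i : Γ, ∑ α : {α : R // α ≠ 0}, x i α ≤ M) :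
    ∃ w : (Γ → R) → ℕ,
      (∀ a : Γ → R, w a ≠ 0 →
        ∀ α : {α : R // α ≠ 0},
          (Finset.univ.filter (fun i => a i = α.val)).card = k α) ∧
      (∑ a : Γ → R, w a = M) ∧
      (∀ (α : {α : R // α ≠ 0}) (i : Γ),
        x i α = ∑ a ∈ Finset.univ.filter (fun a : Γ → R => a i = α.val), w a) := by
  set y : Γ → R → ℕ := fun i b => if h : b = 0 then M - ∑ α, x i α else x i ⟨b, h⟩
  set m : R → ℕ := fun b => if h : b = 0 then Fintype.card Γ - ∑ α, k α else k ⟨b, h⟩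
  have hrow : ∀ i, ∑ b, y i b = M := fun i => by
    rw [sum_dite_eq_add_sum]
    have := hbd i
    omega
  have hcol : ∀ b, ∑ i, y i b = m b * M := fun b => by
    by_cases hb : b = 0
    · simpa [y, m, hb] using sum_tsub_sum_eq_card_tsub_mul hsum hbd
    · simpa [y, m, hb] using hsum ⟨b, hb⟩
  obtain ⟨w, hsupp, hw, hmarg⟩ := exists_decomposition_into_assignments hrow hcol
  refine ⟨w, fun a ha α => ?_, hw, fun α i => ?_⟩
  · simpa [m, α.2] using hsupp a ha α
  · simpa [y, α.2] using hmarg i α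

/-- the combinatorial core of Proposition 14. If nonnegative integers
`x_i^{(α)}` satisfy `Σ_i x_i^{(α)} = k_α·M` for each `α ∈ R⁻` and `Σ_α x_i^{(α)} ≤ M`
for each `i`, then there are nonnegative integer weights `w_a` supported on the vectors
`a ∈ R^Γ` having exactly `k_α` coordinates equal to `α` for each `α ∈ R⁻`, summing to
`M`, whose marginals recover the `x_i^{(α)}`. -/
theorem flow_decomposition {R : Type} [CommRing R] [Fintype R] [DecidableEq R]
    {Γ : Type} [Fintype Γ] [DecidableEq Γ]
    (M : ℕ) (hM : 0 < M)
    (k : {α : R // α ≠ 0} → ℕ)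
    (x : Γ → {α : R // α ≠ 0} → ℕ)
    (hsum : ∀ α : {α : R // α ≠ 0}, ∑ i, x i α = k α * M)
    (hbd : ∀ i : Γ, ∑ α : {α : R // α ≠ 0}, x i α ≤ M) :
    ∃ w : (Γ → R) → ℕ,
      (∀ a : Γ → R, w a ≠ 0 →
        ∀ α : {α : R // α ≠ 0},
          (Finset.univ.filter (fun i => a i = α.val)).card = k α) ∧
      (∑ a : Γ → R, w a = M) ∧
      (∀ (α : {α : R // α ≠ 0}) (i : Γ),
        x i α = ∑ a ∈ Finset.univ.filter (fun a : Γ → R => a i = α.val), w a) :=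
  flow_decomposition_general M k x hsum hbd
end
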